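/- Let A be an axiom set containing every instance of axiom .2, let Γ, U, W be maximal consistent sets with respect to K+A for a countable agent-label type, and let i be an agent with {φ : K_i φ ∈ Γ} ⊆ U and {φ : K_i φ ∈ Γ} ⊆ W. Then the set S := {φ : K_i φ ∈ U} ∪ {φ : K_i φ ∈ W} is consistent with respect to K+A. -/
import Mathlib


/-- Formulas of multi-agent modal logic: ⊥, variables, ∨, ∧, →, K_i. -/
inductive Form (α P : Type) : Type
  | fls : Form α P
  | var : P → Form α P
  | dis : Form α P → Form α P → Form α P
  | con : Form α P → Form α P → Form α P
  | imp : Form α P → Form α P → Form α P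
  | box : α → Form α P → Form α P

namespace Form

/-- Negation ¬φ := φ → ⊥. -/
def neg {α P : Type} (p : Form α P) : Form α P := p.imp .fls

/-- Verum ⊤ := ¬⊥. -/
def top {α P : Type} : Form α P := neg .fls

/-- Biconditional φ ↔ ψ := (φ → ψ) ∧ (ψ → φ). -/
def iff' {α P : Type} (p q : Form α P) : Form α P := (p.imp q).con (q.imp p)

/-- Dual operator L_i φ := ¬ K_i ¬ φ. -/
def dia {α P : Type} (i : α) (p : Form α P) : Form α P := (Form.box i p.neg).neg

end Form

/-- Boolean evaluation of a formula, treating modal subformulas as atoms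
(interpreted by `h`). -/
def beval {α P : Type} (g : P → Bool) (h : Form α P → Bool) : Form α P → Bool
  | .fls => false
  | .var x => g x
  | .dis p q => beval g h p || beval g h q
  | .con p q => beval g h p && beval g h q
  | .imp p q => !(beval g h p) || beval g h q
  | .box i p => h (.box i p)

/-- A propositional tautology: true under every valuation of the variables and
of the modal subformulas. -/
def Tautology {α P : Type} (p : Form α P) : Prop := ∀ g h, beval g h p = true

/-- Hilbert system K + the axiom set `Ax`: all propositional tautologies,
axiom K, the extra axioms, closed under Modus Ponens and Necessitation. -/
inductive Prf {α P : Type} (Ax : Form α P → Prop) : Form α P → Prop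
  | taut {p} : Tautology p → Prf Ax p
  | axK {i p q} : Prf Ax (((Form.box i (p.imp q)).con (Form.box i p)).imp (Form.box i q))
  | ax {p} : Ax p → Prf Ax p
  | mp {p q} : Prf Ax (p.imp q) → Prf Ax p → Prf Ax q
  | nec {i p} : Prf Ax p → Prf Ax (Form.box i p)

/-- The empty axiom set: `Prf KAx` is the pure system K. -/
def KAx {α P : Type} : Form α P → Prop := fun _ => False

/-- Axiom T: K_i φ → φ. -/
def AxT {α P : Type} (φ : Form α P) : Prop := ∃ i p, φ = (Form.box i p).imp p

/-- Axiom 4: K_i φ → K_i K_i φ. -/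
def Ax4 {α P : Type} (φ : Form α P) : Prop :=
  ∃ i p, φ = (Form.box i p).imp (Form.box i (Form.box i p))

/-- Axiom .2: ¬K_i ¬K_i φ → K_i ¬K_i ¬φ. -/
def Ax2 {α P : Type} (φ : Form α P) : Prop :=
  ∃ i p, φ = ((Form.box i (Form.box i p).neg).neg).imp (Form.box i (Form.box i p.neg).neg)

/-- Axioms of S4: T and 4. -/
def AxS4 {α P : Type} (φ : Form α P) : Prop := AxT φ ∨ Ax4 φ

/-- Axioms of S4.2: T, 4 and .2. -/
def AxS42 {α P : Type} (φ : Form α P) : Prop := AxT φ ∨ Ax4 φ ∨ Ax2 φ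

/-- Iterated implication ψ₁ → (ψ₂ → … (ψ_k → φ)…); for the empty list it is φ. -/
def imply {α P : Type} : List (Form α P) → Form α P → Form α P
  | [], q => q
  | p :: l, q => p.imp (imply l q)

/-- Conjunction ψ₁ ∧ … ∧ ψ_k (∧ ⊤); for the empty list it is ⊤. -/
def conj {α P : Type} : List (Form α P) → Form α P
  | [] => Form.top
  | p :: l => p.con (conj l)

/-- A set Γ is consistent w.r.t. K+Ax if no finite list of its elements derives ⊥. -/
def Consistent {α P : Type} (Ax : Form α P → Prop) (Γ : Set (Form α P)) : Prop :=
  ¬ ∃ l : List (Form α P), (∀ ψ ∈ l, ψ ∈ Γ) ∧ Prf Ax (imply l Form.fls)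

/-- Γ is maximal consistent if it is consistent and contains φ or ¬φ for every φ. -/
def MaximalConsistent {α P : Type} (Ax : Form α P → Prop) (Γ : Set (Form α P)) : Prop :=
  Consistent Ax Γ ∧ ∀ φ : Form α P, φ ∈ Γ ∨ Form.neg φ ∈ Γ

/-- A Kripke model: a valuation and one accessibility relation per agent. -/
structure Kripke (α P W : Type) where
  val : W → P → Prop
  rel : α → W → W → Prop

/-- Satisfaction of a formula at a world of a Kripke model. -/
def sat {α P W : Type} (M : Kripke α P W) : W → Form α P → Prop
  | _, .fls => False
  | w, .var x => M.val w x
  | w, .dis p q => sat M w p ∨ sat M w q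
  | w, .con p q => sat M w p ∧ sat M w q
  | w, .imp p q => sat M w p → sat M w q
  | w, .box i p => ∀ v, M.rel i w v → sat M v p

/-- A family of relations is weakly directed (confluent). -/
def WeaklyDirected {α W : Type} (R : α → W → W → Prop) : Prop :=
  ∀ i v w u, R i v w → R i v u → ∃ x, R i w x ∧ R i u x

/-- Each relation is reflexive. -/
def ReflexiveRel {α W : Type} (R : α → W → W → Prop) : Prop :=
  ∀ i w, R i w w

/-- Each relation is transitive. -/
def TransitiveRel {α W : Type} (R : α → W → W → Prop) : Prop :=
  ∀ i u v w, R i u v → R i v w → R i u w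

section Aux

variable {α P : Type} (Ax : Form α P → Prop)

/-- Derive `a → (b → c)` from `(a ∧ b) → c`. -/
lemma prf_uncurry {a b c : Form α P} (h : Prf Ax ((a.con b).imp c)) :
    Prf Ax (a.imp (b.imp c)) := by
  refine Prf.mp (Prf.taut ?_) h
  intro g h'
  simp only [beval]
  cases beval g h' a <;> cases beval g h' b <;> cases beval g h' c <;> rfl

/-- Composition: from `a → (b → c)` and `c → d`, get `a → (b → d)`. -/
lemma prf_comp {a b c d : Form α P} (h1 : Prf Ax (a.imp (b.imp c)))
    (h2 : Prf Ax (c.imp d)) : Prf Ax (a.imp (b.imp d)) := by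
  have t : Prf Ax ((a.imp (b.imp c)).imp ((c.imp d).imp (a.imp (b.imp d)))) := by
    refine Prf.taut ?_
    intro g h'
    simp only [beval]
    cases beval g h' a <;> cases beval g h' b <;> cases beval g h' c <;>
      cases beval g h' d <;> rfl
  exact Prf.mp (Prf.mp t h1) h2

lemma prf_Kdist {i : α} {p q : Form α P} :
    Prf Ax ((Form.box i (p.imp q)).imp ((Form.box i p).imp (Form.box i q))) :=
  prf_uncurry Ax Prf.axK

lemma beval_imply (g : P → Bool) (h : Form α P → Bool) (l : List (Form α P))
    (q : Form α P) :
    beval g h (imply l q) = (!(l.all (beval g h)) || beval g h q) := by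
  induction l with
  | nil => simp [imply]
  | cons p l ih =>
      simp only [imply, beval, ih, List.all_cons]
      cases beval g h p <;> cases l.all (beval g h) <;> simp

lemma prf_imply_subset {l l' : List (Form α P)} {q : Form α P}
    (hsub : ∀ ψ ∈ l, ψ ∈ l') (h : Prf Ax (imply l q)) : Prf Ax (imply l' q) := by
  refine Prf.mp (Prf.taut ?_) h
  intro g h'
  simp only [beval, beval_imply]
  cases hq : beval g h' q
  · cases hall : l'.all (beval g h')
    · simp
    · have : l.all (beval g h') = true := by
        rw [List.all_eq_true] at hall ⊢
        exact fun ψ hm => hall ψ (hsub ψ hm)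
      simp [this]
  · simp

lemma imply_append (l1 l2 : List (Form α P)) (q : Form α P) :
    imply (l1 ++ l2) q = imply l1 (imply l2 q) := by
  induction l1 with
  | nil => rfl
  | cons p l ih => simp [imply, ih]

lemma prf_box_imply (i : α) (l : List (Form α P)) (q : Form α P) :
    Prf Ax ((Form.box i (imply l q)).imp (imply (l.map (Form.box i)) (Form.box i q))) := by
  induction l with
  | nil =>
      refine Prf.taut ?_
      intro g h
      simp only [imply, List.map_nil, beval]
      cases h (Form.box i q) <;> rfl
  | cons p l ih =>
      simp only [imply, List.map_cons]
      exact prf_comp Ax (prf_Kdist Ax) ih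

lemma prf_imply_box {i : α} {l : List (Form α P)} {q : Form α P}
    (h : Prf Ax (imply l q)) :
    Prf Ax (imply (l.map (Form.box i)) (Form.box i q)) :=
  Prf.mp (prf_box_imply Ax i l q) (Prf.nec h)

/-! ### Facts about maximal consistent sets -/

variable {Γ : Set (Form α P)}

lemma mcs_not_both (hΓ : MaximalConsistent Ax Γ) {p : Form α P} (h1 : p ∈ Γ) (h2 : Form.neg p ∈ Γ) : False := by
  refine hΓ.1 ⟨[p, Form.neg p], ?_, ?_⟩
  · intro ψ hψ
    simp only [List.mem_cons, List.not_mem_nil, or_false] at hψ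
    rcases hψ with rfl | rfl <;> assumption
  · refine Prf.taut ?_
    intro g h
    simp only [imply, Form.neg, beval]
    cases beval g h p <;> rfl

lemma mcs_mem_of_prf (hΓ : MaximalConsistent Ax Γ) {p : Form α P} (h : Prf Ax p) : p ∈ Γ := by
  rcases hΓ.2 p with hp | hp
  · exact hp
  · exfalso
    refine hΓ.1 ⟨[Form.neg p], ?_, ?_⟩
    · intro ψ hψ
      simp only [List.mem_cons, List.not_mem_nil, or_false] at hψ
      rcases hψ with rfl; exact hp
    · refine Prf.mp (Prf.taut ?_) h
      intro g h'
      simp only [imply, Form.neg, beval]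
      cases beval g h' p <;> rfl

lemma mcs_mp (hΓ : MaximalConsistent Ax Γ) {p q : Form α P} (h1 : p.imp q ∈ Γ) (h2 : p ∈ Γ) : q ∈ Γ := by
  rcases hΓ.2 q with hq | hq
  · exact hq
  · exfalso
    refine hΓ.1 ⟨[p.imp q, p, Form.neg q], ?_, ?_⟩
    · intro ψ hψ
      simp only [List.mem_cons, List.not_mem_nil, or_false] at hψ
      rcases hψ with rfl | rfl | rfl <;> assumption
    · refine Prf.taut ?_
      intro g h
      simp only [imply, Form.neg, beval]
      cases beval g h p <;> cases beval g h q <;> rfl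

lemma mcs_imply_mem (hΓ : MaximalConsistent Ax Γ) {l : List (Form α P)} {q : Form α P}
    (h : imply l q ∈ Γ) (hl : ∀ ψ ∈ l, ψ ∈ Γ) : q ∈ Γ := by
  induction l with
  | nil => exact h
  | cons p l ih =>
      exact ih (mcs_mp Ax hΓ h (hl p (by simp)))
        (fun ψ hψ => hl ψ (List.mem_cons_of_mem _ hψ))

lemma mcs_imply (hΓ : MaximalConsistent Ax Γ) {l : List (Form α P)} {q : Form α P}
    (h : Prf Ax (imply l q)) (hl : ∀ ψ ∈ l, ψ ∈ Γ) : q ∈ Γ :=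
  mcs_imply_mem Ax hΓ (mcs_mem_of_prf Ax hΓ h) hl

end Aux

/-- If A contains every instance of axiom .2, and Γ, U, W are
maximal consistent w.r.t. K+A (countable agent labels and propositional
symbols) with {φ : K_i φ ∈ Γ} ⊆ U and {φ : K_i φ ∈ Γ} ⊆ W, then the set
S := {φ : K_i φ ∈ U} ∪ {φ : K_i φ ∈ W} is consistent w.r.t. K+A. -/
theorem union_of_known_consistent {α P : Type} [Countable α] [Countable P]
    (A : Form α P → Prop) (hA : ∀ φ : Form α P, Ax2 φ → A φ)
    (Γ U W : Set (Form α P))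
    (hΓ : MaximalConsistent A Γ) (hU : MaximalConsistent A U)
    (hW : MaximalConsistent A W) (i : α)
    (hΓU : {φ : Form α P | Form.box i φ ∈ Γ} ⊆ U)
    (hΓW : {φ : Form α P | Form.box i φ ∈ Γ} ⊆ W) :
    Consistent A ({φ : Form α P | Form.box i φ ∈ U} ∪
                  {φ : Form α P | Form.box i φ ∈ W}) := by

  rintro ⟨l, hl, hprf⟩
  classical
  set l1 := l.filter (fun ψ => decide (Form.box i ψ ∈ U)) with hl1
  set l2 := l.filter (fun ψ => !decide (Form.box i ψ ∈ U)) with hl2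
  have hsub : ∀ ψ ∈ l, ψ ∈ l1 ++ l2 := by
    intro ψ hψ
    rw [List.mem_append, hl1, hl2, List.mem_filter, List.mem_filter]
    by_cases hc : Form.box i ψ ∈ U <;> simp [hψ, hc]
  have hprf2 : Prf A (imply l1 (imply l2 Form.fls)) := by
    rw [← imply_append]
    exact prf_imply_subset A hsub hprf
  set c := imply l2 Form.fls with hc
  -- K_i c ∈ U
  have hKc : Form.box i c ∈ U := by
    refine mcs_imply A hU (prf_imply_box A hprf2) ?_
    intro ψ hψ
    rw [List.mem_map] at hψ
    rcases hψ with ⟨φ, hφ, rfl⟩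
    rw [hl1, List.mem_filter] at hφ
    simpa using hφ.2
  -- ¬ K_i ¬ K_i c ∈ Γ
  have hstep2 : Form.neg (Form.box i (Form.box i c).neg) ∈ Γ := by
    rcases hΓ.2 (Form.box i (Form.box i c).neg) with hmem | hmem
    · exact absurd (hΓU hmem) (fun hn => mcs_not_both A hU hKc hn)
    · exact hmem
  -- axiom .2 gives K_i ¬ K_i ¬ c ∈ Γ
  have hax : Prf A (((Form.box i (Form.box i c).neg).neg).imp
      (Form.box i (Form.box i c.neg).neg)) :=
    Prf.ax (hA _ ⟨i, c, rfl⟩)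
  have hstep3 : Form.box i (Form.box i c.neg).neg ∈ Γ :=
    mcs_mp A hΓ (mcs_mem_of_prf A hΓ hax) hstep2
  have hstep4 : (Form.box i c.neg).neg ∈ W := hΓW hstep3
  -- but K_i ¬ c ∈ W
  have htaut : Prf A (imply l2 c.neg) := by
    refine Prf.taut ?_
    intro g h
    rw [hc]
    simp only [beval_imply, Form.neg, beval]
    cases l2.all (beval g h) <;> rfl
  have hKnc : Form.box i c.neg ∈ W := by
    refine mcs_imply A hW (prf_imply_box A htaut) ?_
    intro ψ hψ
    rw [List.mem_map] at hψ
    rcases hψ with ⟨φ, hφ, rfl⟩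
    rw [hl2, List.mem_filter] at hφ
    have hφU : Form.box i φ ∉ U := by simpa using hφ.2
    rcases hl φ hφ.1 with hm | hm
    · exact absurd hm hφU
    · exact hm
  exact mcs_not_both A hW hKnc hstep4
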